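/- Let G be a connected graph. If each connected component of the strong resolving graph G_SR is a regular graph (each component being regular of some degree at least 1, possibly different degrees for different components), then sdim_f(G) = |M(G)|/2. -/

import Mathlib

open SimpleGraph

/-- `Sset G x y` is the set `S{x,y}` of vertices `z` such that `x` lies on some shortest
`y`–`z` path or `y` lies on some shortest `x`–`z` path in `G`. -/
def Sset {V : Type*} (G : SimpleGraph V) (x y : V) : Set V :=
  {z | (∃ p : G.Walk y z, p.length = G.dist y z ∧ x ∈ p.support) ∨
       (∃ p : G.Walk x z, p.length = G.dist x z ∧ y ∈ p.support)}

/-- A strong resolving function of `G`: `g : V → [0,1]` with `g(S{x,y}) ≥ 1` for all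
distinct vertices `x, y`. -/
def IsSRF {V : Type*} (G : SimpleGraph V) (g : V → ℝ) : Prop :=
  (∀ v, 0 ≤ g v ∧ g v ≤ 1) ∧ ∀ x y : V, x ≠ y → 1 ≤ ∑ᶠ z ∈ Sset G x y, g z

/-- The fractional strong metric dimension of `G`. -/
noncomputable def sdimf {V : Type*} (G : SimpleGraph V) : ℝ :=
  sInf {s : ℝ | ∃ g : V → ℝ, IsSRF G g ∧ s = ∑ᶠ v, g v}

/-- A strong resolving set of `G`: every pair of distinct vertices is strongly resolved
by some vertex of `S` (i.e. some vertex of `S` lies in `S{x,y}`). -/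
def IsSRSet {V : Type*} (G : SimpleGraph V) (S : Set V) : Prop :=
  ∀ x y : V, x ≠ y → ∃ z ∈ S, z ∈ Sset G x y

/-- The strong metric dimension of `G`: the minimum cardinality of a strong resolving set. -/
noncomputable def sdim {V : Type*} (G : SimpleGraph V) : ℕ :=
  sInf {n : ℕ | ∃ S : Set V, IsSRSet G S ∧ S.ncard = n}

/-- `u` is maximally distant from `v`: `d(u,v) ≥ d(w,v)` for every neighbor `w` of `u`. -/
def MaxDistFrom {V : Type*} (G : SimpleGraph V) (u v : V) : Prop :=
  ∀ w : V, G.Adj u w → G.dist w v ≤ G.dist u v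

/-- `u` and `v` are mutually maximally distant (MMD) in `G`. -/
def MMD {V : Type*} (G : SimpleGraph V) (u v : V) : Prop :=
  u ≠ v ∧ MaxDistFrom G u v ∧ MaxDistFrom G v u

/-- The strong resolving graph of `G` (on the ambient vertex set): `u ~ v` iff `u` MMD `v`. -/
def SRGraph {V : Type*} (G : SimpleGraph V) : SimpleGraph V where
  Adj := MMD G
  symm := ⟨fun _ _ h => ⟨h.1.symm, h.2.2, h.2.1⟩⟩
  loopless := ⟨fun _ h => h.1 rfl⟩

/-- `M(G)`: the set of vertices that are mutually maximally distant with some vertex. -/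
def Mset {V : Type*} (G : SimpleGraph V) : Set V := {x | ∃ y, MMD G x y}

/-- The matching number of `G`. -/
noncomputable def matchNum {V : Type*} (G : SimpleGraph V) : ℕ :=
  sSup {n : ℕ | ∃ M : G.Subgraph, M.IsMatching ∧ M.edgeSet.ncard = n}

/-- The corona product `G ⊙ H`. -/
def corona {V W : Type*} (G : SimpleGraph V) (H : SimpleGraph W) :
    SimpleGraph (V ⊕ V × W) where
  Adj x y :=
    match x, y with
    | Sum.inl u, Sum.inl u' => G.Adj u u'
    | Sum.inl u, Sum.inr iw => u = iw.1
    | Sum.inr iw, Sum.inl u => iw.1 = u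
    | Sum.inr iw, Sum.inr iw' => iw.1 = iw'.1 ∧ H.Adj iw.2 iw'.2
  symm := by
    refine ⟨?_⟩
    rintro (u | iw) (u' | iw') h
    · exact G.adj_symm h
    · exact h.symm
    · exact h.symm
    · exact ⟨h.1.symm, H.adj_symm h.2⟩
  loopless := by
    refine ⟨?_⟩
    rintro (u | iw) h
    · exact G.irrefl h
    · exact H.irrefl h.2

/-- `K₁ ⊙ H`: the graph obtained from `H` by adding one new vertex adjacent to every
vertex of `H`. -/
def cone {W : Type*} (H : SimpleGraph W) : SimpleGraph (Option W) where
  Adj x y :=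
    match x, y with
    | none, none => False
    | none, some _ => True
    | some _, none => True
    | some w, some w' => H.Adj w w'
  symm := by
    refine ⟨?_⟩
    rintro (_ | w) (_ | w') h
    · exact h
    · exact trivial
    · exact trivial
    · exact H.adj_symm h
  loopless := by
    refine ⟨?_⟩
    rintro (_ | w) h
    · exact h
    · exact H.irrefl h

/-- The lexicographic product `G[H]`. -/
def lexProd {V W : Type*} (G : SimpleGraph V) (H : SimpleGraph W) :
    SimpleGraph (V × W) where
  Adj x y := G.Adj x.1 y.1 ∨ (x.1 = y.1 ∧ H.Adj x.2 y.2)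
  symm := by
    refine ⟨?_⟩
    rintro x y (h | ⟨h1, h2⟩)
    · exact Or.inl (G.adj_symm h)
    · exact Or.inr ⟨h1.symm, H.adj_symm h2⟩
  loopless := by
    refine ⟨?_⟩
    rintro x (h | ⟨_, h2⟩)
    · exact G.irrefl h
    · exact H.irrefl h2

/-- `SL{x,y} = (N[x] ∪ N[y]) ∩ S{x,y}`. -/
def SLset {W : Type*} (H : SimpleGraph W) (x y : W) : Set W :=
  (insert x (H.neighborSet x) ∪ insert y (H.neighborSet y)) ∩ Sset H x y

/-- A strong locating function of `H`. -/
def IsSLF {W : Type*} (H : SimpleGraph W) (f : W → ℝ) : Prop :=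
  (∀ v, 0 ≤ f v ∧ f v ≤ 1) ∧ ∀ x y : W, x ≠ y → 1 ≤ ∑ᶠ z ∈ SLset H x y, f z

/-- `sl_f(H)`: the minimum weight of a strong locating function of `H`. -/
noncomputable def slf {W : Type*} (H : SimpleGraph W) : ℝ :=
  sInf {s : ℝ | ∃ f : W → ℝ, IsSLF H f ∧ s = ∑ᶠ v, f v}

/-- `u` has a true twin: some other vertex with the same closed neighborhood. -/
def HasTrueTwin {V : Type*} (G : SimpleGraph V) (u : V) : Prop :=
  ∃ v : V, v ≠ u ∧ insert v (G.neighborSet v) = insert u (G.neighborSet u)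

/-- `u` has a false twin: some other vertex with the same open neighborhood. -/
def HasFalseTwin {V : Type*} (G : SimpleGraph V) (u : V) : Prop :=
  ∃ v : V, v ≠ u ∧ G.neighborSet v = G.neighborSet u

/-- `m₁(G)`: number of vertices in type-1 (singleton) classes of the twin relation. -/
noncomputable def m1 {V : Type*} (G : SimpleGraph V) : ℕ :=
  {u : V | ¬ HasTrueTwin G u ∧ ¬ HasFalseTwin G u}.ncard

/-- `m₂(G)`: number of vertices in type-2 (clique) classes of the twin relation. -/
noncomputable def m2 {V : Type*} (G : SimpleGraph V) : ℕ :=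
  {u : V | HasTrueTwin G u}.ncard

/-- `m₃(G)`: number of vertices in type-3 (independent set) classes of the twin relation. -/
noncomputable def m3 {V : Type*} (G : SimpleGraph V) : ℕ :=
  {u : V | HasFalseTwin G u}.ncard

/-- The strong resolving graph of `G` (whose vertex set is `M(G)`) is Hamiltonian:
there is a cycle in `SRGraph G` passing through every vertex of `M(G)`. -/
def SRHamiltonian {V : Type*} (G : SimpleGraph V) : Prop :=
  ∃ (u : V) (p : (SRGraph G).Walk u u), p.IsCycle ∧ ∀ v ∈ Mset G, v ∈ p.support

/-!
For MMD vertices `u, v`, no shortest path from `v` continues past `u` (its next vertex would be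
farther from `v`), and vice versa, so `S{u,v} = {u,v}`: every strong resolving function is a
fractional vertex cover of `G_SR`. Conversely, extending a shortest `x`–`y` path beyond both ends
until the ends are maximally distant gives an MMD pair inside `S{x,y}`, so the weight `1/2` on
`M(G)` is strong resolving. A fractional vertex cover `g` of a graph whose degree is constant
along edges has weight at least half the number of non-isolated vertices: summing the edge
constraints `1 ≤ g u + g v` with weight `1 / deg v` counts every such vertex once on the left and
twice on the right.
-/

theorem finsum_mem_le_finsum_mem_of_subset {α M : Type*} [Finite α] [AddCommMonoid M]
    [PartialOrder M] [IsOrderedAddMonoid M] {f : α → M} {s t : Set α} (hf : 0 ≤ f)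
    (h : s ⊆ t) : ∑ᶠ a ∈ s, f a ≤ ∑ᶠ a ∈ t, f a := by
  rw [finsum_mem_def, finsum_mem_def]
  exact finsum_le_finsum' (Set.toFinite _) (Set.toFinite _)
    (Set.indicator_le_indicator_of_subset h hf)

theorem finsum_mem_const {α R : Type*} [NonAssocSemiring R] {s : Set α} (hs : s.Finite) (c : R) :
    ∑ᶠ _ ∈ s, c = s.ncard * c := by
  rw [← finsum_one, Nat.cast_finsum_mem hs, Nat.cast_one, finsum_mem_mul' _ _ hs]
  simp only [one_mul]

namespace SimpleGraph

open Finset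

variable {V : Type*}

theorem ncard_neighborSet_eq_degree (H : SimpleGraph V) (v : V) [Fintype (H.neighborSet v)] :
    (H.neighborSet v).ncard = H.degree v := by
  rw [← coe_neighborFinset, Set.ncard_coe_finset, card_neighborFinset_eq_degree]

variable [Fintype V] (H : SimpleGraph V) [DecidableRel H.Adj]

theorem sum_neighborFinset_div_degree (f : V → ℝ) (v : V) :
    ∑ _u ∈ H.neighborFinset v, f v / H.degree v = H.support.indicator f v := by
  rw [sum_const, card_neighborFinset_eq_degree, nsmul_eq_mul]
  by_cases hv : v ∈ H.support
  · have : (H.degree v : ℝ) ≠ 0 := by exact_mod_cast ((degree_pos_iff_mem_support H v).2 hv).ne'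
    rw [Set.indicator_of_mem hv, mul_div_cancel₀ _ this]
  · rw [Set.indicator_of_notMem hv, (degree_eq_zero_iff_notMem_support H v).2 hv]
    simp

theorem ncard_support_le_two_mul_finsum_of_cover {g : V → ℝ}
    (hdeg : ∀ ⦃u v⦄, H.Adj u v → H.degree u = H.degree v)
    (hcover : ∀ ⦃u v⦄, H.Adj u v → 1 ≤ g u + g v) :
    (H.support.ncard : ℝ) ≤ 2 * ∑ᶠ v ∈ H.support, g v := by
  have hswap : ∑ v, ∑ u ∈ H.neighborFinset v, g u / H.degree u =
      ∑ u, ∑ v ∈ H.neighborFinset u, g u / H.degree u :=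
    Finset.sum_comm' fun v u => by simp [mem_neighborFinset, H.adj_comm]
  calc (H.support.ncard : ℝ)
      = ∑ v, H.support.indicator (fun _ => 1) v := by
        rw [← finsum_eq_sum_of_fintype, ← finsum_mem_def, finsum_mem_const (Set.toFinite _),
          mul_one]
    _ = ∑ v, ∑ _u ∈ H.neighborFinset v, (1 : ℝ) / H.degree v :=
        sum_congr rfl fun v _ => (H.sum_neighborFinset_div_degree (fun _ => 1) v).symm
    _ ≤ ∑ v, ∑ u ∈ H.neighborFinset v, (g u + g v) / H.degree v := by
        gcongr with v _ u hu
        rw [add_comm]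
        exact hcover ((H.mem_neighborFinset v u).1 hu)
    _ = ∑ v, ∑ u ∈ H.neighborFinset v, g u / H.degree u +
          ∑ v, ∑ u ∈ H.neighborFinset v, g v / H.degree v := by
        rw [← sum_add_distrib]
        refine sum_congr rfl fun v _ => ?_
        rw [← sum_add_distrib]
        refine sum_congr rfl fun u hu => ?_
        rw [add_div, hdeg ((H.mem_neighborFinset v u).1 hu)]
    _ = 2 * ∑ᶠ v ∈ H.support, g v := by
        rw [hswap, finsum_mem_def, finsum_eq_sum_of_fintype]
        simp_rw [sum_neighborFinset_div_degree]
        ring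

end SimpleGraph

section StrongResolving

variable {V : Type*} {G : SimpleGraph V}

theorem MMD.symm {u v : V} (h : MMD G u v) : MMD G v u :=
  ⟨h.1.symm, h.2.2, h.2.1⟩

theorem MaxDistFrom.eq_of_mem_support {x y z : V} (hx : MaxDistFrom G x y) (p : G.Walk y z)
    (hp : p.length = G.dist y z) (hxp : x ∈ p.support) : z = x := by
  classical
  by_contra hzx
  obtain ⟨w, hxw, q, hq⟩ := Walk.exists_eq_cons_of_ne (Ne.symm hzx) (p.dropUntil x hxp)
  set r := (p.takeUntil x hxp).concat hxw
  have hpr : p = r.append q := by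
    rw [Walk.concat_append, ← hq, Walk.take_spec]
  have hr : r.length = G.dist y w :=
    length_eq_dist_of_subwalk hp ⟨Walk.nil, q, by simpa using hpr⟩
  have htake : (p.takeUntil x hxp).length = G.dist y x :=
    length_eq_dist_of_subwalk hp (p.isSubwalk_takeUntil hxp)
  have hfar := hx w hxw
  rw [dist_comm, ← hr, Walk.length_concat, htake, dist_comm] at hfar
  omega

theorem MMD.Sset_subset {x y : V} (h : MMD G x y) : Sset G x y ⊆ {x, y} := by
  rintro z (⟨p, hp, hxp⟩ | ⟨p, hp, hyp⟩)
  · exact Or.inl (h.2.1.eq_of_mem_support p hp hxp)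
  · exact Or.inr (h.2.2.eq_of_mem_support p hp hyp)

theorem mem_Sset_of_dist_eq_add (hG : G.Connected) {x y z : V}
    (h : G.dist y z = G.dist y x + G.dist x z) : z ∈ Sset G x y := by
  obtain ⟨p, hp⟩ := hG.exists_walk_length_eq_dist y x
  obtain ⟨q, hq⟩ := hG.exists_walk_length_eq_dist x z
  refine Or.inl ⟨p.append q, by rw [Walk.length_append, hp, hq, h], ?_⟩
  exact (Walk.mem_support_append_iff _ _).2 (Or.inl p.end_mem_support)

theorem Sset_comm (x y : V) : Sset G x y = Sset G y x :=
  Set.ext fun _ => or_comm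

theorem exists_maxDistFrom_dist_eq_add [Finite V] (hG : G.Connected) (x y : V) :
    ∃ u, MaxDistFrom G u y ∧ G.dist u y = G.dist u x + G.dist x y := by
  obtain ⟨u, hu, hmax⟩ := Set.exists_max_image {u | G.dist u y = G.dist u x + G.dist x y}
    (G.dist · y) (Set.toFinite _) ⟨x, by simp⟩
  refine ⟨u, fun w huw => ?_, hu⟩
  by_contra! hfar
  have hwu : G.dist w u ≤ 1 := by simpa using dist_le huw.symm.toWalk
  have h₁ : G.dist w x ≤ G.dist w u + G.dist u x := hG.dist_triangle
  have h₂ : G.dist w y ≤ G.dist w u + G.dist u y := hG.dist_triangle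
  have h₃ : G.dist w y ≤ G.dist w x + G.dist x y := hG.dist_triangle
  change G.dist u y = G.dist u x + G.dist x y at hu
  have hw : G.dist w y = G.dist w x + G.dist x y := by omega
  exact (hmax w hw).not_gt hfar

theorem exists_MMD_mem_Sset [Finite V] (hG : G.Connected) {x y : V} (hxy : x ≠ y) :
    ∃ u v, MMD G u v ∧ u ∈ Sset G x y ∧ v ∈ Sset G x y := by
  obtain ⟨u, hu, hux⟩ := exists_maxDistFrom_dist_eq_add hG x y
  obtain ⟨v, hv, hvy⟩ := exists_maxDistFrom_dist_eq_add hG y u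
  have hxy₀ : 0 < G.dist x y := hG.pos_dist_of_ne hxy
  have h₁ : G.dist x v ≤ G.dist x y + G.dist y v := hG.dist_triangle
  have h₂ : G.dist u v ≤ G.dist u x + G.dist x v := hG.dist_triangle
  have hcomm : ∀ a b : V, G.dist a b = G.dist b a := fun _ _ => dist_comm
  have huv : G.dist u v = G.dist u y + G.dist y v := by
    rw [hcomm u v, hvy, hcomm v y, hcomm y u]; omega
  have hne : u ≠ v := by
    rintro rfl
    simp only [dist_self] at huv
    omega
  have hmax : MaxDistFrom G u v := fun w huw => by
    have : G.dist w v ≤ G.dist w y + G.dist y v := hG.dist_triangle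
    have := hu w huw
    omega
  refine ⟨u, v, ⟨hne, hmax, hv⟩, mem_Sset_of_dist_eq_add hG ?_, ?_⟩
  · rw [hcomm y u, hcomm y x, hcomm x u]
    omega
  · rw [Sset_comm]
    exact mem_Sset_of_dist_eq_add hG (by omega)

theorem IsSRF.one_le_add_of_MMD [Finite V] {g : V → ℝ} (hg : IsSRF G g) {u v : V}
    (h : MMD G u v) : 1 ≤ g u + g v :=
  calc 1 ≤ ∑ᶠ z ∈ Sset G u v, g z := hg.2 u v h.1
    _ ≤ ∑ᶠ z ∈ ({u, v} : Set V), g z :=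
        finsum_mem_le_finsum_mem_of_subset (fun z => (hg.1 z).1) h.Sset_subset
    _ = g u + g v := finsum_mem_pair h.1

theorem isSRF_indicator_Mset [Finite V] (hG : G.Connected) :
    IsSRF G ((Mset G).indicator fun _ => 1 / 2) := by
  have hnonneg : 0 ≤ (Mset G).indicator fun _ => (1 / 2 : ℝ) :=
    Set.indicator_nonneg fun _ _ => by norm_num
  refine ⟨fun v => ⟨hnonneg v, ?_⟩, fun x y hxy => ?_⟩
  · by_cases hv : v ∈ Mset G <;> norm_num [hv]
  obtain ⟨u, v, huv, hu, hv⟩ := exists_MMD_mem_Sset hG hxy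
  calc (1 : ℝ) = ∑ᶠ z ∈ ({u, v} : Set V), (Mset G).indicator (fun _ => 1 / 2) z := by
        rw [finsum_mem_pair huv.1, Set.indicator_of_mem (show u ∈ Mset G from ⟨v, huv⟩),
          Set.indicator_of_mem (show v ∈ Mset G from ⟨u, huv.symm⟩)]
        norm_num
    _ ≤ _ := finsum_mem_le_finsum_mem_of_subset hnonneg (Set.pair_subset hu hv)

theorem IsSRF.ncard_Mset_le_two_mul_finsum [Finite V] {g : V → ℝ} (hg : IsSRF G g)
    (hdeg : ∀ u v, (SRGraph G).Adj u v →
      ((SRGraph G).neighborSet u).ncard = ((SRGraph G).neighborSet v).ncard) :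
    ((Mset G).ncard : ℝ) ≤ 2 * ∑ᶠ v, g v := by
  classical
  have := Fintype.ofFinite V
  calc ((Mset G).ncard : ℝ) ≤ 2 * ∑ᶠ v ∈ Mset G, g v :=
        (SRGraph G).ncard_support_le_two_mul_finsum_of_cover
          (fun u v h => by simpa only [ncard_neighborSet_eq_degree] using hdeg u v h)
          (fun _ _ h => hg.one_le_add_of_MMD h)
    _ ≤ 2 * ∑ᶠ v, g v := by
        rw [← finsum_mem_univ g]
        gcongr
        exact finsum_mem_le_finsum_mem_of_subset (fun v => (hg.1 v).1) (Set.subset_univ _)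

end StrongResolving

/-- If each connected component of `G_SR` is a regular graph, then
`sdim_f(G) = |M(G)|/2`.  (Since every vertex of `M(G)` has an MMD partner, each such
component automatically has degree at least 1; regularity of every component is expressed
by saying that any two vertices connected in `SRGraph G` have the same degree there.) -/
theorem sdimf_eq_half_Mset_of_regular_components {V : Type*} [Fintype V] (G : SimpleGraph V)
    (hG : G.Connected)
    (hreg : ∀ u v : V, (SRGraph G).Reachable u v →
      ((SRGraph G).neighborSet u).ncard = ((SRGraph G).neighborSet v).ncard) :
    sdimf G = ((Mset G).ncard : ℝ) / 2 := by
  refine IsLeast.csInf_eq ⟨⟨_, isSRF_indicator_Mset hG, ?_⟩, ?_⟩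
  · rw [← finsum_mem_def, finsum_mem_const (Set.toFinite _)]
    ring
  rintro _ ⟨g, hg, rfl⟩
  linarith [hg.ncard_Mset_le_two_mul_finsum fun u v h => hreg u v h.reachable]
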